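/- arXiv:2502.04551 — 2 statements merged into one kernel-verified Lean document; each statement's English description precedes it below -/
import Mathlib

section
/- Consider the cascade of two discrete-time systems on ℝⁿ: x^{(t+1)} = f(x^{(t)}) with initial condition x^{(0)} = ξ, and e^{(t+1)} = g(e^{(t)}, x^{(t)}) with initial condition e^{(0)} = η, where f(0) = 0 and g(0,0) = 0. Suppose there exists a class-KL function β₁ such that every solution of the x-system satisfies ‖x^{(t)}(ξ)‖ ≤ β₁(‖ξ‖, t) for all t ∈ ℕ, and there exist a class-KL function β₂ and a class-K function γ such that every solution of the e-system satisfies ‖e^{(t)}‖ ≤ β₂(‖η‖, t) + γ(‖x^{(t)}‖) for all t ∈ ℕ. Then the origin of the cascade system is globally asymptotically stable: the function β(r,t) = β₁(r,t) + β₂(r,t) + γ(β₁(r,t)) is a class-KL function and the concatenated state s^{(t)} = (x^{(t)}, e^{(t)}) ∈ ℝⁿ × ℝⁿ satisfies ‖s^{(t)}‖ ≤ β(‖(ξ,η)‖, t) for all t ∈ ℕ, where ‖(x,e)‖ = √(‖x‖² + ‖e‖²) denotes the Euclidean norm on ℝⁿ × ℝⁿ. -/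
/-!
Class-K and class-KL functions are closed under sums, and composing a class-K function after a
class-KL function gives a class-KL function; hence `β₁ + β₂ + γ ∘ β₁` is class-KL. Along a
solution, `‖x t‖ ≤ β₁(‖ξ‖, t)` and `‖e t‖ ≤ β₂(‖η‖, t) + γ(‖x t‖) ≤ β₂(‖η‖, t) + γ(β₁(‖ξ‖, t))`.
Since `‖ξ‖, ‖η‖ ≤ ‖(ξ, η)‖` and all three terms are increasing in the initial radius, adding the
two bounds and using `‖(x, e)‖ ≤ ‖x‖ + ‖e‖` gives the claimed estimate.
-/

open Filter Topology

/-- A class-K function: a continuous function `α : ℝ≥0 → ℝ≥0` (modelled as a real function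
on `[0,∞)`) that is strictly increasing and satisfies `α 0 = 0`. -/
def IsClassK (α : ℝ → ℝ) : Prop :=
  ContinuousOn α (Set.Ici 0) ∧ StrictMonoOn α (Set.Ici 0) ∧ α 0 = 0 ∧
    ∀ r, 0 ≤ r → 0 ≤ α r

/-- A class-K∞ function: a class-K function with `α r → ∞` as `r → ∞`. -/
def IsClassKInf (α : ℝ → ℝ) : Prop :=
  IsClassK α ∧ Tendsto α atTop atTop

/-- A class-KL function: a continuous function `β : ℝ≥0 × ℝ≥0 → ℝ≥0` such that for each fixed
`t`, `r ↦ β r t` is class-K, and for each fixed `r`, `t ↦ β r t` is decreasing and tends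
to `0` as `t → ∞`. -/
def IsClassKL (β : ℝ → ℝ → ℝ) : Prop :=
  ContinuousOn (Function.uncurry β) (Set.Ici 0 ×ˢ Set.Ici 0) ∧
  (∀ t, 0 ≤ t → IsClassK fun r => β r t) ∧
  (∀ r, 0 ≤ r → AntitoneOn (fun t => β r t) (Set.Ici 0)) ∧
  (∀ r, 0 ≤ r → Tendsto (fun t => β r t) atTop (𝓝 0))

open Set

namespace IsClassK

variable {α γ : ℝ → ℝ}

theorem nonneg (hα : IsClassK α) {r : ℝ} (hr : 0 ≤ r) : 0 ≤ α r :=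
  hα.2.2.2 r hr

theorem mapsTo (hα : IsClassK α) : MapsTo α (Ici 0) (Ici 0) :=
  fun _ hr => hα.nonneg hr

theorem monotoneOn (hα : IsClassK α) : MonotoneOn α (Ici 0) :=
  hα.2.1.monotoneOn

theorem le_of_le (hα : IsClassK α) {r s : ℝ} (hr : 0 ≤ r) (hrs : r ≤ s) : α r ≤ α s :=
  hα.monotoneOn hr (hr.trans hrs) hrs

theorem add (hα : IsClassK α) (hγ : IsClassK γ) : IsClassK fun r => α r + γ r :=
  ⟨hα.1.add hγ.1, fun _ ha _ hb hab => add_lt_add (hα.2.1 ha hb hab) (hγ.2.1 ha hb hab),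
    by simp [hα.2.2.1, hγ.2.2.1], fun _ hr => add_nonneg (hα.nonneg hr) (hγ.nonneg hr)⟩

theorem comp (hγ : IsClassK γ) (hα : IsClassK α) : IsClassK fun r => γ (α r) :=
  ⟨hγ.1.comp hα.1 hα.mapsTo,
    fun _ ha _ hb hab => hγ.2.1 (hα.mapsTo ha) (hα.mapsTo hb) (hα.2.1 ha hb hab),
    by simp [hα.2.2.1, hγ.2.2.1], fun _ hr => hγ.nonneg (hα.nonneg hr)⟩

theorem tendsto_comp_nhds_zero (hγ : IsClassK γ) {ι : Type*} {l : Filter ι} {u : ι → ℝ}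
    (hu : Tendsto u l (𝓝 0)) (hu_nonneg : ∀ᶠ i in l, 0 ≤ u i) :
    Tendsto (fun i => γ (u i)) l (𝓝 0) := by
  have hγ_cont : Tendsto γ (𝓝[Ici 0] 0) (𝓝 0) := by
    simpa [hγ.2.2.1] using (hγ.1 0 self_mem_Ici).tendsto
  exact hγ_cont.comp (tendsto_nhdsWithin_iff.2 ⟨hu, hu_nonneg⟩)

end IsClassK

namespace IsClassKL

variable {β β' : ℝ → ℝ → ℝ} {γ : ℝ → ℝ}

theorem classK (hβ : IsClassKL β) {t : ℝ} (ht : 0 ≤ t) : IsClassK fun r => β r t :=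
  hβ.2.1 t ht

theorem nonneg (hβ : IsClassKL β) {r t : ℝ} (hr : 0 ≤ r) (ht : 0 ≤ t) : 0 ≤ β r t :=
  (hβ.classK ht).nonneg hr

theorem add (hβ : IsClassKL β) (hβ' : IsClassKL β') : IsClassKL fun r t => β r t + β' r t :=
  ⟨hβ.1.add hβ'.1, fun _ ht => (hβ.classK ht).add (hβ'.classK ht),
    fun r hr _ ha _ hb hab => add_le_add (hβ.2.2.1 r hr ha hb hab) (hβ'.2.2.1 r hr ha hb hab),
    fun r hr => by simpa using (hβ.2.2.2 r hr).add (hβ'.2.2.2 r hr)⟩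

theorem classK_comp (hγ : IsClassK γ) (hβ : IsClassKL β) : IsClassKL fun r t => γ (β r t) :=
  ⟨hγ.1.comp hβ.1 fun _ hp => hβ.nonneg hp.1 hp.2, fun _ ht => hγ.comp (hβ.classK ht),
    fun r hr _ ha _ hb hab =>
      hγ.le_of_le (hβ.nonneg hr hb) (hβ.2.2.1 r hr ha hb hab),
    fun r hr => hγ.tendsto_comp_nhds_zero (hβ.2.2.2 r hr)
      (eventually_atTop.2 ⟨0, fun _ ht => hβ.nonneg hr ht⟩)⟩

end IsClassKL

theorem le_sqrt_sq_add_sq_left (a b : ℝ) : a ≤ √(a ^ 2 + b ^ 2) :=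
  Real.le_sqrt_of_sq_le (le_add_of_nonneg_right (sq_nonneg b))

theorem le_sqrt_sq_add_sq_right (a b : ℝ) : b ≤ √(a ^ 2 + b ^ 2) :=
  Real.le_sqrt_of_sq_le (le_add_of_nonneg_left (sq_nonneg a))

theorem sqrt_sq_add_sq_le_add {a b : ℝ} (ha : 0 ≤ a) (hb : 0 ≤ b) : √(a ^ 2 + b ^ 2) ≤ a + b :=
  Real.sqrt_le_iff.2 ⟨add_nonneg ha hb, by nlinarith⟩

theorem sqrt_sq_add_sq_le_cascade_bound {β₁ β₂ : ℝ → ℝ → ℝ} {γ : ℝ → ℝ}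
    (hβ₁ : IsClassKL β₁) (hβ₂ : IsClassKL β₂) (hγ : IsClassK γ) {a b p q t : ℝ}
    (ha : 0 ≤ a) (hb : 0 ≤ b) (hp : 0 ≤ p) (hq : 0 ≤ q) (ht : 0 ≤ t)
    (hpa : p ≤ β₁ a t) (hqb : q ≤ β₂ b t + γ p) :
    √(p ^ 2 + q ^ 2) ≤
      β₁ √(a ^ 2 + b ^ 2) t + β₂ √(a ^ 2 + b ^ 2) t + γ (β₁ √(a ^ 2 + b ^ 2) t) := by
  set s := √(a ^ 2 + b ^ 2)
  have hβ₁_le : β₁ a t ≤ β₁ s t := (hβ₁.classK ht).le_of_le ha (le_sqrt_sq_add_sq_left a b)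
  have hβ₂_le : β₂ b t ≤ β₂ s t := (hβ₂.classK ht).le_of_le hb (le_sqrt_sq_add_sq_right a b)
  have hγ_le : γ p ≤ γ (β₁ s t) := hγ.le_of_le hp (hpa.trans hβ₁_le)
  linarith [sqrt_sq_add_sq_le_add hp hq]

theorem cascade_globally_asymptotically_stable_general {n : ℕ}
    (f : EuclideanSpace ℝ (Fin n) → EuclideanSpace ℝ (Fin n))
    (g : EuclideanSpace ℝ (Fin n) → EuclideanSpace ℝ (Fin n) → EuclideanSpace ℝ (Fin n))
    (β₁ β₂ : ℝ → ℝ → ℝ) (γ : ℝ → ℝ)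
    (hβ₁ : IsClassKL β₁) (hβ₂ : IsClassKL β₂) (hγ : IsClassK γ)
    (hx : ∀ (ξ : EuclideanSpace ℝ (Fin n)) (x : ℕ → EuclideanSpace ℝ (Fin n)),
      x 0 = ξ → (∀ t, x (t + 1) = f (x t)) → ∀ t : ℕ, ‖x t‖ ≤ β₁ ‖ξ‖ t)
    (he : ∀ (ξ η : EuclideanSpace ℝ (Fin n)) (x e : ℕ → EuclideanSpace ℝ (Fin n)),
      x 0 = ξ → e 0 = η → (∀ t, x (t + 1) = f (x t)) → (∀ t, e (t + 1) = g (e t) (x t)) →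
      ∀ t : ℕ, ‖e t‖ ≤ β₂ ‖η‖ t + γ ‖x t‖) :
    IsClassKL (fun r t => β₁ r t + β₂ r t + γ (β₁ r t)) ∧
    ∀ (ξ η : EuclideanSpace ℝ (Fin n)) (x e : ℕ → EuclideanSpace ℝ (Fin n)),
      x 0 = ξ → e 0 = η → (∀ t, x (t + 1) = f (x t)) → (∀ t, e (t + 1) = g (e t) (x t)) →
      ∀ t : ℕ, Real.sqrt (‖x t‖ ^ 2 + ‖e t‖ ^ 2) ≤
        β₁ (Real.sqrt (‖ξ‖ ^ 2 + ‖η‖ ^ 2)) t + β₂ (Real.sqrt (‖ξ‖ ^ 2 + ‖η‖ ^ 2)) t +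
          γ (β₁ (Real.sqrt (‖ξ‖ ^ 2 + ‖η‖ ^ 2)) t) := by
  refine ⟨(hβ₁.add hβ₂).add (IsClassKL.classK_comp hγ hβ₁), ?_⟩
  intro ξ η x e hx0 he0 hx_step he_step t
  exact sqrt_sq_add_sq_le_cascade_bound hβ₁ hβ₂ hγ (norm_nonneg ξ) (norm_nonneg η)
    (norm_nonneg (x t)) (norm_nonneg (e t)) t.cast_nonneg (hx ξ x hx0 hx_step t)
    (he ξ η x e hx0 he0 hx_step he_step t)

/-- Cascade of `x⁺ = f x` and `e⁺ = g e x` on ℝⁿ: if the `x`-system admits a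
class-KL bound `β₁` and the `e`-system admits an ISS bound `β₂, γ` in terms of the current state,
then `β(r,t) = β₁(r,t) + β₂(r,t) + γ(β₁(r,t))` is class-KL and bounds the Euclidean norm of the
concatenated state `(x, e)`. -/
theorem cascade_globally_asymptotically_stable {n : ℕ}
    (f : EuclideanSpace ℝ (Fin n) → EuclideanSpace ℝ (Fin n))
    (g : EuclideanSpace ℝ (Fin n) → EuclideanSpace ℝ (Fin n) → EuclideanSpace ℝ (Fin n))
    (hf0 : f 0 = 0) (hg0 : g 0 0 = 0)
    (β₁ β₂ : ℝ → ℝ → ℝ) (γ : ℝ → ℝ)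
    (hβ₁ : IsClassKL β₁) (hβ₂ : IsClassKL β₂) (hγ : IsClassK γ)
    (hx : ∀ (ξ : EuclideanSpace ℝ (Fin n)) (x : ℕ → EuclideanSpace ℝ (Fin n)),
      x 0 = ξ → (∀ t, x (t + 1) = f (x t)) → ∀ t : ℕ, ‖x t‖ ≤ β₁ ‖ξ‖ t)
    (he : ∀ (ξ η : EuclideanSpace ℝ (Fin n)) (x e : ℕ → EuclideanSpace ℝ (Fin n)),
      x 0 = ξ → e 0 = η → (∀ t, x (t + 1) = f (x t)) → (∀ t, e (t + 1) = g (e t) (x t)) →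
      ∀ t : ℕ, ‖e t‖ ≤ β₂ ‖η‖ t + γ ‖x t‖) :
    IsClassKL (fun r t => β₁ r t + β₂ r t + γ (β₁ r t)) ∧
    ∀ (ξ η : EuclideanSpace ℝ (Fin n)) (x e : ℕ → EuclideanSpace ℝ (Fin n)),
      x 0 = ξ → e 0 = η → (∀ t, x (t + 1) = f (x t)) → (∀ t, e (t + 1) = g (e t) (x t)) →
      ∀ t : ℕ, Real.sqrt (‖x t‖ ^ 2 + ‖e t‖ ^ 2) ≤
        β₁ (Real.sqrt (‖ξ‖ ^ 2 + ‖η‖ ^ 2)) t + β₂ (Real.sqrt (‖ξ‖ ^ 2 + ‖η‖ ^ 2)) t +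
          γ (β₁ (Real.sqrt (‖ξ‖ ^ 2 + ‖η‖ ^ 2)) t) :=
  cascade_globally_asymptotically_stable_general f g β₁ β₂ γ hβ₁ hβ₂ hγ hx he
end

section
/- Let 𝒜 ∈ ℝ^{n×n} be Schur stable, i.e., every (complex) eigenvalue of 𝒜 has modulus strictly less than 1. Then for every symmetric positive definite matrix Q ∈ ℝ^{n×n} there exists a unique symmetric positive definite matrix P ∈ ℝ^{n×n} solving the discrete Lyapunov equation 𝒜ᵀ P 𝒜 − P + Q = 0, and it is given by the convergent series P = Σ_{k=0}^{∞} (𝒜ᵀ)^k Q 𝒜^k. -/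
/-!
By Gelfand's formula, Schur stability gives `‖𝒜 ^ k‖ ≤ r ^ k` eventually for some `r < 1`, so
`∑ (𝒜ᵀ) ^ k Q 𝒜 ^ k` converges geometrically; shifting the index by one shows that its sum `P`
solves `𝒜ᵀ P 𝒜 - P + Q = 0`, and `P ≥ Q > 0`. The difference `D` of two solutions satisfies
`𝒜ᵀ D 𝒜 = D`, hence `D = (𝒜ᵀ) ^ k D 𝒜 ^ k → 0`.
-/

open Matrix Filter Topology
open scoped ComplexOrder

/-- A real square matrix is Schur stable if every (complex) eigenvalue has modulus
strictly less than `1`, i.e. its spectral radius is `< 1`. -/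
def SchurStable {n : ℕ} (M : Matrix (Fin n) (Fin n) ℝ) : Prop :=
  ∀ z ∈ spectrum ℂ (M.map (algebraMap ℝ ℂ)), ‖z‖ < 1

theorem spectrum.exists_norm_pow_le_of_spectralRadius_lt_one {A : Type*} [NormedRing A]
    [NormedAlgebra ℂ A] [CompleteSpace A] {a : A} (ha : spectralRadius ℂ a < 1) :
    ∃ r : ℝ, 0 ≤ r ∧ r < 1 ∧ ∀ᶠ k in atTop, ‖a ^ k‖ ≤ r ^ k := by
  obtain ⟨s, hρs, hs1⟩ := exists_between ha
  have hs : s ≠ ⊤ := hs1.ne_top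
  refine ⟨s.toReal, ENNReal.toReal_nonneg, ENNReal.toReal_lt_of_lt_ofReal (by simpa using hs1), ?_⟩
  filter_upwards [(pow_norm_pow_one_div_tendsto_nhds_spectralRadius a).eventually_lt_const hρs,
    eventually_ne_atTop 0] with k hk hk0
  rw [← ENNReal.ofReal_toReal hs, ENNReal.ofReal_lt_ofReal_iff', one_div,
    Real.rpow_inv_lt_iff_of_pos (norm_nonneg _) ENNReal.toReal_nonneg (by positivity)] at hk
  exact_mod_cast hk.1.le

section Pow

variable {R : Type*}

theorem pow_mul_mul_pow_eq_self [Monoid R] {a b d : R} (h : b * d * a = d) (k : ℕ) :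
    b ^ k * d * a ^ k = d := by
  induction k with
  | zero => simp
  | succ k ih =>
    calc b ^ (k + 1) * d * a ^ (k + 1) = b ^ k * (b * d * a) * a ^ k := by
          rw [pow_succ b, pow_succ' a]; simp only [mul_assoc]
      _ = d := by rw [h, ih]

variable [Ring R] [TopologicalSpace R] [T2Space R] {a b x : R}

theorem eq_of_mul_mul_sub_add_eq_zero {y z : R} (hy : b * y * a - y + x = 0)
    (hz : b * z * a - z + x = 0) (hlim : Tendsto (fun k => b ^ k * (y - z) * a ^ k) atTop (𝓝 0)) :
    y = z := by
  have hfix : b * (y - z) * a = y - z :=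
    calc b * (y - z) * a = (b * y * a - y + x) - (b * z * a - z + x) + (y - z) := by noncomm_ring
      _ = y - z := by rw [hy, hz, sub_zero, zero_add]
  rw [funext (pow_mul_mul_pow_eq_self hfix)] at hlim
  exact sub_eq_zero.mp (tendsto_nhds_unique tendsto_const_nhds hlim)

variable [IsTopologicalRing R]

theorem Summable.mul_tsum_pow_mul_mul_pow_mul (hs : Summable fun k => b ^ k * x * a ^ k) :
    b * (∑' k, b ^ k * x * a ^ k) * a = (∑' k, b ^ k * x * a ^ k) - x := by
  rw [← hs.tsum_mul_left, ← (hs.mul_left b).tsum_mul_right, hs.tsum_eq_zero_add]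
  simp only [pow_zero, one_mul, mul_one, add_sub_cancel_left]
  exact tsum_congr fun k => by rw [pow_succ' b, pow_succ a]; simp only [mul_assoc]

end Pow

section PosDef

variable {ι n 𝕜 : Type*} [Fintype n] [RCLike 𝕜]

theorem Matrix.PosSemidef.tsum {f : ι → Matrix n n 𝕜} (hf : Summable f)
    (hpos : ∀ i, (f i).PosSemidef) : (∑' i, f i).PosSemidef := by
  refine .of_dotProduct_mulVec_nonneg (conjTranspose_tsum.trans (tsum_congr fun i => (hpos i).1))
    fun x => ?_
  let q : Matrix n n 𝕜 →L[𝕜] 𝕜 := LinearMap.toContinuousLinearMap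
    { toFun := fun M => star x ⬝ᵥ M *ᵥ x
      map_add' := fun M N => by simp only [add_mulVec, dotProduct_add]
      map_smul' := fun c M => by simp only [smul_mulVec, dotProduct_smul, RingHom.id_apply] }
  change 0 ≤ q (∑' i, f i)
  rw [q.map_tsum hf]
  exact tsum_nonneg fun i => (hpos i).dotProduct_mulVec_nonneg x

theorem Matrix.posDef_tsum_of_posDef_zero {f : ℕ → Matrix n n 𝕜} (hf : Summable f)
    (h0 : (f 0).PosDef) (hpos : ∀ k, (f (k + 1)).PosSemidef) : (∑' k, f k).PosDef := by
  rw [hf.tsum_eq_zero_add]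
  exact h0.add_posSemidef (.tsum ((summable_nat_add_iff 1).mpr hf) hpos)

end PosDef

namespace SchurStable

variable {n : ℕ} {𝒜 : Matrix (Fin n) (Fin n) ℝ}

-- The Frobenius norm is invariant under transposition and under `Matrix.map (algebraMap ℝ ℂ)`.
attribute [local instance] Matrix.frobeniusNormedAddCommGroup Matrix.frobeniusNormedRing
  Matrix.frobeniusNormedAlgebra

theorem spectralRadius_lt_one (hA : SchurStable 𝒜) :
    spectralRadius ℂ (𝒜.map (algebraMap ℝ ℂ)) < 1 := by
  rcases (spectrum ℂ (𝒜.map (algebraMap ℝ ℂ))).eq_empty_or_nonempty with h | h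
  · rw [spectralRadius, h]; simp
  · exact_mod_cast spectrum.spectralRadius_lt_of_forall_lt_of_nonempty h (r := 1)
      fun z hz => by exact_mod_cast hA z hz

theorem exists_norm_pow_le (hA : SchurStable 𝒜) :
    ∃ r : ℝ, 0 ≤ r ∧ r < 1 ∧ ∀ᶠ k in atTop, ‖𝒜 ^ k‖ ≤ r ^ k := by
  obtain ⟨r, hr0, hr1, hev⟩ :=
    spectrum.exists_norm_pow_le_of_spectralRadius_lt_one hA.spectralRadius_lt_one
  refine ⟨r, hr0, hr1, hev.mono fun k hk => ?_⟩
  rwa [← RingHom.mapMatrix_apply, ← map_pow, RingHom.mapMatrix_apply,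
    frobenius_norm_map_eq _ _ fun _ => by simp] at hk

theorem summable_transpose_pow_mul_mul_pow (hA : SchurStable 𝒜) (X : Matrix (Fin n) (Fin n) ℝ) :
    Summable fun k => (𝒜ᵀ) ^ k * X * 𝒜 ^ k := by
  obtain ⟨r, hr0, hr1, hev⟩ := hA.exists_norm_pow_le
  refine .of_norm_bounded_eventually_nat
    ((summable_geometric_of_lt_one (sq_nonneg r) (by nlinarith)).mul_left ‖X‖)
    (hev.mono fun k hk => ?_)
  calc ‖(𝒜ᵀ) ^ k * X * 𝒜 ^ k‖ ≤ ‖(𝒜 ^ k)ᵀ‖ * ‖X‖ * ‖𝒜 ^ k‖ := by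
        rw [transpose_pow]; exact norm_mul₃_le
    _ ≤ r ^ k * ‖X‖ * r ^ k := by rw [frobenius_norm_transpose]; gcongr
    _ = ‖X‖ * (r ^ 2) ^ k := by ring

end SchurStable

/-- If `𝒜` is Schur stable, then for every symmetric positive definite `Q`
there is a unique symmetric positive definite `P` with `𝒜ᵀ P 𝒜 - P + Q = 0`, given by the
convergent series `P = ∑_{k=0}^∞ (𝒜ᵀ)^k Q 𝒜^k`. -/
theorem discrete_lyapunov_equation_solution {n : ℕ}
    (𝒜 : Matrix (Fin n) (Fin n) ℝ) (hA : SchurStable 𝒜)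
    (Q : Matrix (Fin n) (Fin n) ℝ) (hQ : Q.PosDef) :
    (∃! P : Matrix (Fin n) (Fin n) ℝ, P.PosDef ∧ 𝒜ᵀ * P * 𝒜 - P + Q = 0) ∧
    Summable (fun k : ℕ => (𝒜ᵀ) ^ k * Q * 𝒜 ^ k) ∧
    (∑' k : ℕ, (𝒜ᵀ) ^ k * Q * 𝒜 ^ k).PosDef ∧
    𝒜ᵀ * (∑' k : ℕ, (𝒜ᵀ) ^ k * Q * 𝒜 ^ k) * 𝒜 - (∑' k : ℕ, (𝒜ᵀ) ^ k * Q * 𝒜 ^ k) + Q = 0 := by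
  have hsum := hA.summable_transpose_pow_mul_mul_pow
  have hP : 𝒜ᵀ * (∑' k, (𝒜ᵀ) ^ k * Q * 𝒜 ^ k) * 𝒜 - (∑' k, (𝒜ᵀ) ^ k * Q * 𝒜 ^ k) + Q = 0 := by
    rw [(hsum Q).mul_tsum_pow_mul_mul_pow_mul, sub_sub_cancel_left, neg_add_cancel]
  have hPpos : (∑' k, (𝒜ᵀ) ^ k * Q * 𝒜 ^ k).PosDef :=
    posDef_tsum_of_posDef_zero (hsum Q) (by simpa using hQ) fun k => by
      simpa [transpose_pow, conjTranspose_eq_transpose_of_trivial] using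
        hQ.posSemidef.conjTranspose_mul_mul_same (𝒜 ^ (k + 1))
  exact ⟨⟨_, ⟨hPpos, hP⟩, fun Y hY => eq_of_mul_mul_sub_add_eq_zero hY.2 hP
    (hsum _).tendsto_atTop_zero⟩, hsum Q, hPpos, hP⟩
end
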